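/- The w-energy form has the contraction property: for every contraction function C and every ξ ∈ D_w, one has C∘ξ ∈ D_w and E_w(C∘ξ, C∘ξ) ≤ E_w(ξ, ξ). -/

import Mathlib

open MeasureTheory ProbabilityTheory
open scoped RealInnerProductSpace ENNReal

noncomputable section

/-- `Ω = {-1,1}^ℕ`, with the two-point set `{-1,1}` coded by `Bool`
(`true` codes `1`, `false` codes `-1`). -/
abbrev Omega : Type := ℕ → Bool

/-- The canonical projection `ζₙ(ω) = ω(n) ∈ {-1,1}`. -/
def zeta (n : ℕ) (ω : Omega) : ℝ := if ω n then 1 else -1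

/-- `Zₙ = (ζₙ + qₙ - pₙ)/(2√(pₙ qₙ))`, as a pointwise function on `Ω`. -/
def Zf (p : ℕ → ℝ) (n : ℕ) (ω : Omega) : ℝ :=
  (zeta n ω + (1 - p n) - p n) / (2 * Real.sqrt (p n * (1 - p n)))

/-- `Z_σ = ∏_{j∈σ} Z_j`, as a pointwise function on `Ω` (`Z_∅ = 1`). -/
def ZSf (p : ℕ → ℝ) (σ : Finset ℕ) (ω : Omega) : ℝ := ∏ j ∈ σ, Zf p j ω

lemma measurable_ZSf (p : ℕ → ℝ) (σ : Finset ℕ) : Measurable (ZSf p σ) := by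
  apply Finset.measurable_prod
  intro j _
  unfold Zf zeta
  apply Measurable.div _ measurable_const
  apply Measurable.sub _ measurable_const
  apply Measurable.add _ measurable_const
  exact (Measurable.of_discrete (f := fun b : Bool => if b = true then (1:ℝ) else -1)).comp
    (measurable_pi_apply j)

/-- A pointwise bound for `Z_j`. -/
def Mb (p : ℕ → ℝ) (j : ℕ) : ℝ :=
  max |(1 + (1 - p j) - p j) / (2 * Real.sqrt (p j * (1 - p j)))|
      |(-1 + (1 - p j) - p j) / (2 * Real.sqrt (p j * (1 - p j)))|

lemma abs_Zf_le (p : ℕ → ℝ) (j : ℕ) (ω : Omega) : |Zf p j ω| ≤ Mb p j := by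
  unfold Zf zeta Mb
  cases h : ω j
  · simpa using le_max_right _ _
  · simpa using le_max_left _ _

lemma memLp_ZSf (p : ℕ → ℝ) (P : Measure Omega) [IsProbabilityMeasure P] (σ : Finset ℕ) :
    MemLp (ZSf p σ) 2 P := by
  refine MemLp.of_bound (measurable_ZSf p σ).aestronglyMeasurable (∏ j ∈ σ, Mb p j) ?_
  filter_upwards with ω
  rw [Real.norm_eq_abs]
  calc |∏ j ∈ σ, Zf p j ω| = ∏ j ∈ σ, |Zf p j ω| := Finset.abs_prod σ _
  _ ≤ ∏ j ∈ σ, Mb p j :=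
      Finset.prod_le_prod (fun j _ => abs_nonneg _) (fun j _ => abs_Zf_le p j ω)

/-- `Z_σ` as an element of the real Hilbert space `L²(Ω, ℙ)`. -/
def ZLp (p : ℕ → ℝ) (P : Measure Omega) [IsProbabilityMeasure P] (σ : Finset ℕ) :
    Lp ℝ 2 P :=
  (memLp_ZSf p P σ).toLp _

/-- The `w`-counting measure `#_w(σ) = ∑_{j∈σ} w(j)`. -/
def cw (w : ℕ → ℝ) (σ : Finset ℕ) : ℝ := ∑ j ∈ σ, w j

/-- The domain `D_w = {ξ ∈ L²(Ω,ℙ) : ∑_{σ∈Γ} #_w(σ) |⟨Z_σ, ξ⟩|² < ∞}`. -/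
def Dw (p : ℕ → ℝ) (P : Measure Omega) [IsProbabilityMeasure P] (w : ℕ → ℝ) :
    Set (Lp ℝ 2 P) :=
  {ξ | Summable fun σ : Finset ℕ => cw w σ * ⟪ZLp p P σ, ξ⟫ ^ 2}

/-- The `w`-energy form `E_w(ξ, η) = ∑_{k=0}^∞ w(k) ⟨∂ₖξ, ∂ₖη⟩`, where `D k` plays the
role of the annihilation operator `∂ₖ`. -/
def Ew {P : Measure Omega} (w : ℕ → ℝ)
    (D : ℕ → (Lp ℝ 2 P →L[ℝ] Lp ℝ 2 P)) (ξ η : Lp ℝ 2 P) : ℝ :=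
  ∑' k, w k * ⟪D k ξ, D k η⟫

/-! The `Z_σ` form an orthonormal basis: orthogonality comes from independence, and completeness
from the fact that the indicator of a cylinder set is a polynomial in finitely many `Z_j`.
A bounded operator is therefore determined by its values on the `Z_σ`, so `∂ₖ` must be the
discrete gradient `(∂ₖ ξ)(ω) = √(pₖ qₖ) (ξ(ω⁺) − ξ(ω⁻))`, where `ω^±` is `ω` with its `k`-th
coordinate set to `±1`; this operator is bounded on `L²` because, by independence, the push-forward
of `ℙ` under `ω ↦ ω^±` is at most `ℙ{ζₖ = ±1}⁻¹ ℙ`. Parseval's identity in this basis gives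
`∑_σ #_w(σ) ⟨Z_σ, ξ⟩² = ∑_k w(k) ‖∂ₖ ξ‖²`, so `ξ ∈ D_w` exactly when its energy is finite, and
for a contraction `C` the gradient satisfies `|∂ₖ(C ∘ ξ)| ≤ |∂ₖ ξ|` pointwise. -/

theorem MeasureTheory.Integrable.ae_eq_zero_of_forall_setIntegral_isPiSystem_eq_zero
    {α E : Type*} [NormedAddCommGroup E] [NormedSpace ℝ E] [CompleteSpace E]
    [m : MeasurableSpace α]
    {μ : Measure α} {S : Set (Set α)} (h_gen : m = MeasurableSpace.generateFrom S)
    (h_pi : IsPiSystem S) (h_univ : Set.univ ∈ S) {f : α → E} (hf : Integrable f μ)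
    (hS : ∀ s ∈ S, ∫ x in s, f x ∂μ = 0) : f =ᵐ[μ] 0 := by
  have h_total : ∫ x, f x ∂μ = 0 := by rw [← setIntegral_univ]; exact hS _ h_univ
  suffices h : ∀ s, MeasurableSet s → ∫ x in s, f x ∂μ = 0 from
    hf.ae_eq_zero_of_forall_setIntegral_eq_zero fun s hs _ => h s hs
  intro s hs
  induction s, hs using MeasurableSpace.induction_on_inter h_gen h_pi with
  | empty => exact setIntegral_empty
  | basic t ht => exact hS t ht
  | compl t ht iht => simpa [iht, h_total] using integral_add_compl ht hf
  | iUnion g g_disj g_meas hg => simp [integral_iUnion g_meas g_disj hf.integrableOn, hg]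

lemma summable_iff_tsum_ofReal_ne_top {ι : Type*} {f : ι → ℝ} (hf : ∀ i, 0 ≤ f i) :
    Summable f ↔ ∑' i, ENNReal.ofReal (f i) ≠ ∞ := by
  refine ⟨Summable.tsum_ofReal_ne_top, fun h => ?_⟩
  lift f to ι → NNReal using hf
  simp only [ENNReal.ofReal_coe_nnreal] at h
  exact NNReal.summable_coe.mpr (ENNReal.tsum_coe_ne_top_iff_summable.mp h)

lemma Finset.involutive_insert_or_erase {α : Type*} [DecidableEq α] (a : α) :
    Function.Involutive fun s : Finset α => if a ∈ s then s.erase a else insert a s := by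
  intro s
  by_cases ha : a ∈ s
  · simp [ha, Finset.insert_erase ha]
  · simp [ha, Finset.erase_insert ha]

section compOfMapLeSMul

variable {α β E : Type*} [MeasurableSpace α] [MeasurableSpace β] [NormedAddCommGroup E]
  {μ : Measure α} {ν : Measure β} {f : α → β} {c : ℝ≥0∞}

lemma MeasureTheory.Measure.QuasiMeasurePreserving.of_map_le_smul (hf : Measurable f)
    (h : μ.map f ≤ c • ν) : Measure.QuasiMeasurePreserving f μ ν :=
  ⟨hf, (Measure.absolutelyContinuous_of_le h).trans Measure.smul_absolutelyContinuous⟩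

lemma eLpNorm_comp_le_of_map_le_smul {q : ℝ≥0∞} (hq : q ≠ ∞) (hf : Measurable f)
    (h : μ.map f ≤ c • ν) {g : β → E} (hg : AEStronglyMeasurable g ν) :
    eLpNorm (g ∘ f) q μ ≤ c ^ (1 / q).toReal * eLpNorm g q ν := by
  rw [← eLpNorm_map_measure (hg.mono_ac (Measure.QuasiMeasurePreserving.of_map_le_smul hf h).2)
    hf.aemeasurable, ← smul_eq_mul, ← eLpNorm_smul_measure_of_ne_top hq]
  exact eLpNorm_mono_measure g h

lemma MeasureTheory.MemLp.comp_of_map_le_smul {q : ℝ≥0∞} (hq : q ≠ ∞) (hc : c ≠ ∞)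
    (hf : Measurable f) (h : μ.map f ≤ c • ν) {g : β → E} (hg : MemLp g q ν) :
    MemLp (g ∘ f) q μ :=
  ⟨hg.1.comp_quasiMeasurePreserving (Measure.QuasiMeasurePreserving.of_map_le_smul hf h),
    (eLpNorm_comp_le_of_map_le_smul hq hf h hg.1).trans_lt
      (ENNReal.mul_lt_top (ENNReal.rpow_lt_top_of_nonneg ENNReal.toReal_nonneg hc) hg.2)⟩

variable [NormedSpace ℝ E] {q : ℝ≥0∞} [Fact (1 ≤ q)]

def MeasureTheory.Lp.compOfMapLeSMul (hq : q ≠ ∞) (hc : c ≠ ∞) (hf : Measurable f)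
    (h : μ.map f ≤ c • ν) : Lp E q ν →L[ℝ] Lp E q μ :=
  have hqmp := Measure.QuasiMeasurePreserving.of_map_le_smul hf h
  LinearMap.mkContinuous
    { toFun g := ((Lp.memLp g).comp_of_map_le_smul hq hc hf h).toLp (g ∘ f)
      map_add' g₁ g₂ := by
        rw [← MemLp.toLp_add, MemLp.toLp_eq_toLp_iff]
        exact hqmp.ae_eq_comp (Lp.coeFn_add g₁ g₂)
      map_smul' a g := by
        rw [RingHom.id_apply, ← MemLp.toLp_const_smul, MemLp.toLp_eq_toLp_iff]
        exact hqmp.ae_eq_comp (Lp.coeFn_smul a g) }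
    (c ^ (1 / q).toReal).toReal
    fun g => by
      simp only [LinearMap.coe_mk, AddHom.coe_mk]
      rw [Lp.norm_toLp, Lp.norm_def, ← ENNReal.toReal_mul]
      exact ENNReal.toReal_mono
        (ENNReal.mul_ne_top (ENNReal.rpow_ne_top_of_nonneg ENNReal.toReal_nonneg hc)
          (Lp.eLpNorm_ne_top g))
        (eLpNorm_comp_le_of_map_le_smul hq hf h (Lp.aestronglyMeasurable g))

lemma MeasureTheory.Lp.compOfMapLeSMul_toLp (hq : q ≠ ∞) (hc : c ≠ ∞) (hf : Measurable f)
    (h : μ.map f ≤ c • ν) {g : β → E} (hg : MemLp g q ν) :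
    Lp.compOfMapLeSMul hq hc hf h (hg.toLp g) =ᵐ[μ] g ∘ f :=
  ((Lp.memLp _).comp_of_map_le_smul hq hc hf h).coeFn_toLp.trans
    ((Measure.QuasiMeasurePreserving.of_map_le_smul hf h).ae_eq_comp hg.coeFn_toLp)

end compOfMapLeSMul

section update

variable {ι β : Type*} [DecidableEq ι] [MeasurableSpace β] {μ : Measure (ι → β)}

lemma measurable_update_left_cylinderEvents_compl (k : ι) (b : β) :
    Measurable[cylinderEvents (X := fun _ : ι => β) {k}ᶜ] (Function.update · k b) := by
  refine (@measurable_pi_iff _ _ _ (cylinderEvents {k}ᶜ) _ _).mpr fun j => ?_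
  by_cases hj : j = k
  · subst hj
    simp
  · simpa [Function.update_of_ne hj] using
      measurable_cylinderEvent_apply (X := fun _ : ι => β) (Set.mem_compl_singleton_iff.mpr hj)

lemma measure_preimage_update_mul [MeasurableSingletonClass β]
    (hμ : iIndepFun (fun i (ω : ι → β) => ω i) μ) (k : ι) (b : β)
    {A : Set (ι → β)} (hA : MeasurableSet A) :
    μ ((Function.update · k b) ⁻¹' A) * μ {ω | ω k = b} = μ (A ∩ {ω | ω k = b}) := by
  -- `update · k b` only reads the coordinates other than `k`, which are independent of `ω k`.
  have hindep := indep_biSup_compl (fun i => (measurable_pi_apply i).comap_le) hμ {k}ᶜ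
  rw [compl_compl] at hindep
  have hA' : MeasurableSet[cylinderEvents {k}ᶜ] ((Function.update · k b) ⁻¹' A) :=
    measurable_update_left_cylinderEvents_compl k b hA
  have hk : MeasurableSet[⨆ i ∈ ({k} : Set ι), MeasurableSpace.comap (fun ω : ι → β => ω i)
      inferInstance] {ω | ω k = b} := by
    rw [iSup_singleton]
    exact ⟨{b}, measurableSet_singleton b, rfl⟩
  rw [← (Indep_iff _ _ μ).mp hindep _ _ hA' hk]
  congr 1
  ext ω
  simp only [Set.mem_inter_iff, Set.mem_preimage, Set.mem_ofPred_eq]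
  constructor <;> rintro ⟨h1, rfl⟩ <;> simpa using h1

lemma map_update_le_smul [MeasurableSingletonClass β]
    (hμ : iIndepFun (fun i (ω : ι → β) => ω i) μ) (k : ι) (b : β) (hb : μ {ω | ω k = b} ≠ 0) :
    μ.map (Function.update · k b) ≤ (μ {ω | ω k = b})⁻¹ • μ := by
  have := hμ.isProbabilityMeasure
  refine Measure.le_iff.mpr fun A hA => ?_
  rw [Measure.map_apply measurable_update_left hA, Measure.smul_apply, smul_eq_mul,
    ← ENNReal.div_eq_inv_mul, ENNReal.le_div_iff_mul_le (Or.inl hb) (Or.inl (measure_ne_top μ _)),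
    measure_preimage_update_mul hμ k b hA]
  exact measure_mono Set.inter_subset_left

end update

lemma measurableSet_eval_eq (k : ℕ) (b : Bool) : MeasurableSet {ω : Omega | ω k = b} :=
  (measurableSet_singleton b).preimage (measurable_pi_apply k)

lemma integral_finset_prod_comp_eval {P : Measure Omega}
    (h : iIndepFun (fun n (ω : Omega) => ω n) P) (g : ℕ → Bool → ℝ) (s : Finset ℕ) :
    ∫ ω, ∏ j ∈ s, g j (ω j) ∂P = ∏ j ∈ s, ∫ ω, g j (ω j) ∂P := by
  have hs : iIndepFun (fun (j : s) (ω : Omega) => ω j) P := h.precomp Subtype.val_injective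
  have := hs.integral_fun_prod_comp (f := fun (j : s) => g j)
    (fun j => (measurable_pi_apply _).aemeasurable)
    (fun j => Measurable.of_discrete.aestronglyMeasurable)
  rw [← Finset.prod_coe_sort s (fun j => ∫ ω, g j (ω j) ∂P), ← this]
  simp_rw [Finset.prod_coe_sort s (fun j => g j _)]

structure IsBernoulliProduct (p : ℕ → ℝ) (P : Measure Omega) : Prop where
  bounds : ∀ n, 0 < p n ∧ p n < 1
  measure_eval_true : ∀ n, P {ω : Omega | ω n = true} = ENNReal.ofReal (p n)
  iIndepFun_eval : iIndepFun (fun n (ω : Omega) => ω n) P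

def sqrtPQ (p : ℕ → ℝ) (n : ℕ) : ℝ := Real.sqrt (p n * (1 - p n))

def zCoord (p : ℕ → ℝ) (n : ℕ) (b : Bool) : ℝ :=
  ((if b then 1 else -1) + (1 - p n) - p n) / (2 * sqrtPQ p n)

lemma Zf_eq_zCoord (p : ℕ → ℝ) (n : ℕ) (ω : Omega) : Zf p n ω = zCoord p n (ω n) := rfl

@[simp]
lemma zCoord_true (p : ℕ → ℝ) (n : ℕ) : zCoord p n true = (1 - p n) / sqrtPQ p n := by
  simp only [zCoord, if_true]
  ring

@[simp]
lemma zCoord_false (p : ℕ → ℝ) (n : ℕ) : zCoord p n false = -(p n / sqrtPQ p n) := by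
  simp only [zCoord, Bool.false_eq_true, if_false]
  ring

lemma sqrtPQ_sq {p : ℕ → ℝ} {n : ℕ} (h : 0 < p n ∧ p n < 1) :
    sqrtPQ p n ^ 2 = p n * (1 - p n) :=
  Real.sq_sqrt (mul_pos h.1 (by linarith [h.2])).le

lemma sqrtPQ_pos {p : ℕ → ℝ} {n : ℕ} (h : 0 < p n ∧ p n < 1) : 0 < sqrtPQ p n :=
  Real.sqrt_pos.mpr (mul_pos h.1 (by linarith [h.2]))

lemma exists_eq_add_mul_zCoord {p : ℕ → ℝ} {k : ℕ} (h : 0 < p k ∧ p k < 1) (g : Bool → ℝ) :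
    ∃ a c : ℝ, ∀ b, g b = a + c * zCoord p k b := by
  have hs := (sqrtPQ_pos h).ne'
  refine ⟨p k * g true + (1 - p k) * g false, sqrtPQ p k * (g true - g false), fun b => ?_⟩
  cases b <;> simp only [zCoord_true, zCoord_false] <;> field_simp <;> ring

def discreteGrad (p : ℕ → ℝ) (k : ℕ) (f : Omega → ℝ) (ω : Omega) : ℝ :=
  sqrtPQ p k * (f (Function.update ω k true) - f (Function.update ω k false))

lemma ZSf_update_of_notMem (p : ℕ → ℝ) {k : ℕ} {σ : Finset ℕ} (hk : k ∉ σ) (b : Bool)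
    (ω : Omega) : ZSf p σ (Function.update ω k b) = ZSf p σ ω :=
  Finset.prod_congr rfl fun j hj => by
    rw [Zf_eq_zCoord, Zf_eq_zCoord, Function.update_of_ne (ne_of_mem_of_not_mem hj hk)]

lemma ZSf_update_of_mem (p : ℕ → ℝ) {k : ℕ} {σ : Finset ℕ} (hk : k ∈ σ) (b : Bool)
    (ω : Omega) : ZSf p σ (Function.update ω k b) = zCoord p k b * ZSf p (σ.erase k) ω := by
  rw [ZSf, ← Finset.mul_prod_erase σ _ hk, Zf_eq_zCoord, Function.update_self]
  exact congrArg _ (ZSf_update_of_notMem p (Finset.notMem_erase k σ) b ω)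

lemma discreteGrad_ZSf {p : ℕ → ℝ} {k : ℕ} (h : 0 < p k ∧ p k < 1) (σ : Finset ℕ) :
    discreteGrad p k (ZSf p σ) = fun ω => if k ∈ σ then ZSf p (σ.erase k) ω else 0 := by
  funext ω
  split_ifs with hk
  · have hs := (sqrtPQ_pos h).ne'
    rw [discreteGrad, ZSf_update_of_mem p hk, ZSf_update_of_mem p hk, zCoord_true, zCoord_false]
    field_simp
    ring
  · rw [discreteGrad, ZSf_update_of_notMem p hk, ZSf_update_of_notMem p hk, sub_self, mul_zero]

lemma inner_ZLp_eq_integral {p : ℕ → ℝ} {P : Measure Omega} [IsProbabilityMeasure P]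
    (σ : Finset ℕ) (ξ : Lp ℝ 2 P) :
    ⟪ZLp p P σ, ξ⟫ = ∫ ω, ZSf p σ ω * ξ ω ∂P := by
  rw [L2.inner_def]
  refine integral_congr_ae ?_
  filter_upwards [(memLp_ZSf p P σ).coeFn_toLp] with ω h
  simp [ZLp, h, mul_comm]

def IsAnnihilation (p : ℕ → ℝ) (P : Measure Omega) [IsProbabilityMeasure P]
    (D : ℕ → (Lp ℝ 2 P →L[ℝ] Lp ℝ 2 P)) : Prop :=
  ∀ k σ, D k (ZLp p P σ) = if k ∈ σ then ZLp p P (σ.erase k) else 0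

lemma Ew_self {P : Measure Omega} (w : ℕ → ℝ) (D : ℕ → (Lp ℝ 2 P →L[ℝ] Lp ℝ 2 P))
    (ξ : Lp ℝ 2 P) : Ew w D ξ ξ = ∑' k, w k * ‖D k ξ‖ ^ 2 := by
  simp only [Ew, real_inner_self_eq_norm_sq]

namespace IsBernoulliProduct

variable {p : ℕ → ℝ} {P : Measure Omega} [IsProbabilityMeasure P]
  {D : ℕ → (Lp ℝ 2 P →L[ℝ] Lp ℝ 2 P)}

lemma measureReal_eval (hP : IsBernoulliProduct p P) (k : ℕ) (b : Bool) :
    P.real {ω : Omega | ω k = b} = if b then p k else 1 - p k := by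
  have htrue : P.real {ω : Omega | ω k = true} = p k := by
    rw [measureReal_def, hP.measure_eval_true, ENNReal.toReal_ofReal (hP.bounds k).1.le]
  cases b
  · have hc : {ω : Omega | ω k = false} = {ω : Omega | ω k = true}ᶜ := by ext; simp
    rw [hc, probReal_compl_eq_one_sub (measurableSet_eval_eq k true), htrue]
    rfl
  · exact htrue

lemma measure_eval_ne_zero (hP : IsBernoulliProduct p P) (k : ℕ) (b : Bool) :
    P {ω : Omega | ω k = b} ≠ 0 := by
  have hpos : 0 < P.real {ω : Omega | ω k = b} := by
    rw [hP.measureReal_eval]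
    cases b <;> simp <;> linarith [hP.bounds k]
  exact fun h0 => hpos.ne' (by rw [measureReal_def, h0, ENNReal.toReal_zero])

lemma integral_comp_eval (hP : IsBernoulliProduct p P) (g : Bool → ℝ) (k : ℕ) :
    ∫ ω, g (ω k) ∂P = p k * g true + (1 - p k) * g false := by
  rw [← integral_map (measurable_pi_apply k).aemeasurable
      (Measurable.of_discrete (f := g)).aestronglyMeasurable,
    integral_fintype Integrable.of_finite, Fintype.sum_bool,
    map_measureReal_apply (measurable_pi_apply k) (measurableSet_singleton _),
    map_measureReal_apply (measurable_pi_apply k) (measurableSet_singleton _)]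
  have h := hP.measureReal_eval k
  simp only [Set.preimage, Set.mem_singleton_iff] at h ⊢
  rw [h, h]
  simp

lemma integral_zCoord (hP : IsBernoulliProduct p P) (k : ℕ) :
    ∫ ω, zCoord p k (ω k) ∂P = 0 := by
  rw [hP.integral_comp_eval, zCoord_true, zCoord_false]
  ring

lemma integral_zCoord_mul_self (hP : IsBernoulliProduct p P) (k : ℕ) :
    ∫ ω, zCoord p k (ω k) * zCoord p k (ω k) ∂P = 1 := by
  rw [hP.integral_comp_eval (fun b => zCoord p k b * zCoord p k b), zCoord_true, zCoord_false]
  have hs := (sqrtPQ_pos (hP.bounds k)).ne'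
  field_simp
  linear_combination (sqrtPQ_sq (hP.bounds k)).symm

lemma integral_ZSf_mul_ZSf (hP : IsBernoulliProduct p P) (σ τ : Finset ℕ) :
    ∫ ω, ZSf p σ ω * ZSf p τ ω ∂P = if σ = τ then 1 else 0 := by
  classical
  set h : ℕ → Bool → ℝ := fun j b =>
    (if j ∈ σ then zCoord p j b else 1) * (if j ∈ τ then zCoord p j b else 1)
  have hprod : ∀ ω, ZSf p σ ω * ZSf p τ ω = ∏ j ∈ σ ∪ τ, h j (ω j) := by
    intro ω
    rw [Finset.prod_mul_distrib, Finset.prod_ite_mem, Finset.prod_ite_mem,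
      Finset.union_inter_cancel_left, Finset.union_inter_cancel_right]
    rfl
  simp_rw [hprod]
  rw [integral_finset_prod_comp_eval hP.iIndepFun_eval]
  split_ifs with hστ
  · subst hστ
    refine Finset.prod_eq_one fun j hj => ?_
    rw [Finset.union_self] at hj
    simpa [h, hj] using hP.integral_zCoord_mul_self j
  · obtain ⟨j, hj⟩ : ∃ j, ¬(j ∈ σ ↔ j ∈ τ) := by simpa [Finset.ext_iff] using hστ
    have hmem : j ∈ σ ∪ τ := by rw [Finset.mem_union]; tauto
    have hhj : h j = zCoord p j := by funext b; by_cases j ∈ σ <;> simp_all [h]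
    exact Finset.prod_eq_zero hmem (hhj ▸ hP.integral_zCoord j)

lemma orthonormal_ZLp (hP : IsBernoulliProduct p P) : Orthonormal ℝ (ZLp p P) := by
  rw [orthonormal_iff_ite]
  intro σ τ
  rw [L2.inner_def, ← hP.integral_ZSf_mul_ZSf σ τ]
  refine integral_congr_ae ?_
  filter_upwards [(memLp_ZSf p P σ).coeFn_toLp, (memLp_ZSf p P τ).coeFn_toLp] with ω h1 h2
  simp [ZLp, h1, h2, mul_comm]

lemma integral_prod_comp_eval_mul_eq_zero (hP : IsBernoulliProduct p P) {ξ : Lp ℝ 2 P}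
    (hξ : ∀ σ, ⟪ZLp p P σ, ξ⟫ = 0) (s : Finset ℕ) (g : ℕ → Bool → ℝ) :
    ∫ ω, (∏ j ∈ s, g j (ω j)) * ξ ω ∂P = 0 := by
  choose a c hac using fun j => exists_eq_add_mul_zCoord (hP.bounds j) (g j)
  have hexpand : ∀ ω : Omega, (∏ j ∈ s, g j (ω j)) * ξ ω =
      ∑ t ∈ s.powerset, ((∏ j ∈ t, a j) * ∏ j ∈ s \ t, c j) * (ZSf p (s \ t) ω * ξ ω) := by
    intro ω
    simp_rw [hac, Finset.prod_add, Finset.sum_mul, Finset.prod_mul_distrib]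
    refine Finset.sum_congr rfl fun t _ => ?_
    simp only [ZSf, Zf_eq_zCoord]
    ring
  simp_rw [hexpand]
  have hint : ∀ t, Integrable (fun ω => ZSf p t ω * ξ ω) P := fun t =>
    (memLp_ZSf p P t).integrable_mul (Lp.memLp ξ)
  rw [integral_finsetSum _ fun t _ => (hint _).const_mul _]
  refine Finset.sum_eq_zero fun t _ => ?_
  rw [integral_const_mul, ← inner_ZLp_eq_integral, hξ, mul_zero]

lemma eq_zero_of_forall_inner_ZLp_eq_zero (hP : IsBernoulliProduct p P) {ξ : Lp ℝ 2 P}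
    (hξ : ∀ σ, ⟪ZLp p P σ, ξ⟫ = 0) : ξ = 0 := by
  rw [Lp.eq_zero_iff_ae_eq_zero]
  refine ((Lp.memLp ξ).integrable one_le_two).ae_eq_zero_of_forall_setIntegral_isPiSystem_eq_zero
    generateFrom_squareCylinders.symm
    (isPiSystem_squareCylinders (fun _ => MeasurableSpace.isPiSystem_measurableSet)
      fun _ => MeasurableSet.univ)
    ⟨∅, fun _ => Set.univ, by simp, by simp⟩ ?_
  rintro _ ⟨s, t, -, rfl⟩
  rw [← integral_indicator (MeasurableSet.pi s.countable_toSet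
      fun j _ => (t j).toFinite.measurableSet),
    ← hP.integral_prod_comp_eval_mul_eq_zero hξ s fun j => (t j).indicator 1]
  refine integral_congr_ae (ae_of_all _ fun ω => ?_)
  simp only [← Set.indicator_pi_one_apply (M₀ := ℝ)]
  by_cases hω : ω ∈ (s : Set ℕ).pi t <;> simp [hω]

lemma orthogonal_span_ZLp_eq_bot (hP : IsBernoulliProduct p P) :
    (Submodule.span ℝ (Set.range (ZLp p P)))ᗮ = ⊥ := by
  rw [Submodule.eq_bot_iff]
  exact fun ξ hξ => hP.eq_zero_of_forall_inner_ZLp_eq_zero fun σ =>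
    hξ _ (Submodule.subset_span ⟨σ, rfl⟩)

lemma dense_span_ZLp (hP : IsBernoulliProduct p P) :
    Dense (Submodule.span ℝ (Set.range (ZLp p P)) : Set (Lp ℝ 2 P)) := by
  rw [Submodule.dense_iff_topologicalClosure_eq_top, Submodule.topologicalClosure_eq_top_iff]
  exact hP.orthogonal_span_ZLp_eq_bot

lemma hasSum_sq_inner_ZLp (hP : IsBernoulliProduct p P) (ξ : Lp ℝ 2 P) :
    HasSum (fun σ => ⟪ZLp p P σ, ξ⟫ ^ 2) (‖ξ‖ ^ 2) := by
  have h := (HilbertBasis.mkOfOrthogonalEqBot hP.orthonormal_ZLp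
    hP.orthogonal_span_ZLp_eq_bot).hasSum_inner_mul_inner ξ ξ
  simp only [HilbertBasis.coe_mkOfOrthogonalEqBot, real_inner_self_eq_norm_sq] at h
  simpa only [real_inner_comm ξ, sq] using h

def updateL (hP : IsBernoulliProduct p P) (k : ℕ) (b : Bool) : Lp ℝ 2 P →L[ℝ] Lp ℝ 2 P :=
  Lp.compOfMapLeSMul ENNReal.ofNat_ne_top (ENNReal.inv_ne_top.mpr (hP.measure_eval_ne_zero k b))
    measurable_update_left (map_update_le_smul hP.iIndepFun_eval k b (hP.measure_eval_ne_zero k b))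

def discreteGradL (hP : IsBernoulliProduct p P) (k : ℕ) : Lp ℝ 2 P →L[ℝ] Lp ℝ 2 P :=
  sqrtPQ p k • (hP.updateL k true - hP.updateL k false)

lemma coeFn_discreteGradL_toLp (hP : IsBernoulliProduct p P) (k : ℕ) {f : Omega → ℝ}
    (hf : MemLp f 2 P) : hP.discreteGradL k (hf.toLp f) =ᵐ[P] discreteGrad p k f := by
  filter_upwards [Lp.coeFn_smul (sqrtPQ p k) ((hP.updateL k true - hP.updateL k false) (hf.toLp f)),
    Lp.coeFn_sub (hP.updateL k true (hf.toLp f)) (hP.updateL k false (hf.toLp f)),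
    Lp.compOfMapLeSMul_toLp _ _ _ _ hf, Lp.compOfMapLeSMul_toLp _ _ _ _ hf] with ω h1 h2 h3 h4
  simp only [discreteGradL, updateL, smul_apply, sub_apply] at h1 h2 ⊢
  rw [h1, Pi.smul_apply, h2, Pi.sub_apply, h3, h4, smul_eq_mul]
  rfl

lemma coeFn_discreteGradL (hP : IsBernoulliProduct p P) (k : ℕ) (ξ : Lp ℝ 2 P) :
    hP.discreteGradL k ξ =ᵐ[P] discreteGrad p k ξ := by
  simpa only [Lp.toLp_coeFn] using hP.coeFn_discreteGradL_toLp k (Lp.memLp ξ)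

lemma discreteGradL_ZLp (hP : IsBernoulliProduct p P) (k : ℕ) (σ : Finset ℕ) :
    hP.discreteGradL k (ZLp p P σ) = if k ∈ σ then ZLp p P (σ.erase k) else 0 := by
  have h := hP.coeFn_discreteGradL_toLp k (memLp_ZSf p P σ)
  rw [discreteGrad_ZSf (hP.bounds k)] at h
  refine Lp.ext (h.trans ?_)
  split_ifs with hk
  · exact (memLp_ZSf p P (σ.erase k)).coeFn_toLp.symm
  · exact (Lp.coeFn_zero ℝ 2 P).symm

lemma annihilation_eq_discreteGradL (hP : IsBernoulliProduct p P) (hD : IsAnnihilation p P D)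
    (k : ℕ) : D k = hP.discreteGradL k :=
  ContinuousLinearMap.ext_on hP.dense_span_ZLp <| by
    rintro _ ⟨σ, rfl⟩
    rw [hD k σ, discreteGradL_ZLp]

lemma inner_ZLp_annihilation (hP : IsBernoulliProduct p P) (hD : IsAnnihilation p P D)
    (k : ℕ) (τ : Finset ℕ) (ξ : Lp ℝ 2 P) :
    ⟪ZLp p P τ, D k ξ⟫ = if k ∈ τ then 0 else ⟪ZLp p P (insert k τ), ξ⟫ := by
  have hext : (innerSL ℝ (ZLp p P τ)).comp (D k) =
      if k ∈ τ then 0 else innerSL ℝ (ZLp p P (insert k τ)) := by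
    refine ContinuousLinearMap.ext_on hP.dense_span_ZLp ?_
    rintro _ ⟨σ, rfl⟩
    have hZ := orthonormal_iff_ite.mp hP.orthonormal_ZLp
    by_cases hkτ : k ∈ τ <;>
      simp only [hkτ, if_true, if_false, ContinuousLinearMap.comp_apply, innerSL_apply_apply,
        hD k σ, apply_ite (inner ℝ _), inner_zero_right, zero_apply, hZ] <;>
      grind
  have := congrArg (· ξ) hext
  split_ifs at this ⊢ <;> simpa using this

lemma hasSum_ite_mem_sq_inner_ZLp (hP : IsBernoulliProduct p P) (hD : IsAnnihilation p P D)
    (k : ℕ) (ξ : Lp ℝ 2 P) :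
    HasSum (fun σ => if k ∈ σ then ⟪ZLp p P σ, ξ⟫ ^ 2 else 0) (‖D k ξ‖ ^ 2) := by
  rw [← ((Finset.involutive_insert_or_erase k).toPerm _).hasSum_iff]
  convert hP.hasSum_sq_inner_ZLp (D k ξ) using 1
  funext τ
  rw [hP.inner_ZLp_annihilation hD]
  by_cases hk : k ∈ τ <;> simp [hk]

lemma tsum_ofReal_cw_mul_sq_inner (hP : IsBernoulliProduct p P) (hD : IsAnnihilation p P D)
    {w : ℕ → ℝ} (hw : ∀ n, 0 ≤ w n) (ξ : Lp ℝ 2 P) :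
    ∑' σ, ENNReal.ofReal (cw w σ * ⟪ZLp p P σ, ξ⟫ ^ 2)
      = ∑' k, ENNReal.ofReal (w k * ‖D k ξ‖ ^ 2) := by
  have hσ : ∀ σ, ENNReal.ofReal (cw w σ * ⟪ZLp p P σ, ξ⟫ ^ 2)
      = ∑' k, if k ∈ σ then ENNReal.ofReal (w k * ⟪ZLp p P σ, ξ⟫ ^ 2) else 0 := fun σ => by
    rw [tsum_eq_sum (s := σ) fun k hk => if_neg hk, Finset.sum_ite_of_true fun _ h => h, cw,
      Finset.sum_mul, ENNReal.ofReal_sum_of_nonneg fun k _ => mul_nonneg (hw k) (sq_nonneg _)]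
  have hk : ∀ k, ENNReal.ofReal (w k * ‖D k ξ‖ ^ 2)
      = ∑' σ, if k ∈ σ then ENNReal.ofReal (w k * ⟪ZLp p P σ, ξ⟫ ^ 2) else 0 := fun k => by
    have h := (hP.hasSum_ite_mem_sq_inner_ZLp hD k ξ).mul_left (w k)
    rw [← h.tsum_eq, ENNReal.ofReal_tsum_of_nonneg
      (fun σ => mul_nonneg (hw k) (by split_ifs <;> positivity)) h.summable]
    exact tsum_congr fun σ => by split_ifs <;> simp
  simp_rw [hσ, hk]
  exact ENNReal.tsum_comm

lemma mem_Dw_iff (hP : IsBernoulliProduct p P) (hD : IsAnnihilation p P D)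
    {w : ℕ → ℝ} (hw : ∀ n, 0 ≤ w n) (ξ : Lp ℝ 2 P) :
    ξ ∈ Dw p P w ↔ Summable fun k => w k * ‖D k ξ‖ ^ 2 := by
  have hcw : ∀ σ, 0 ≤ cw w σ := fun σ => Finset.sum_nonneg fun j _ => hw j
  rw [Dw, Set.mem_ofPred_eq,
    summable_iff_tsum_ofReal_ne_top fun σ => mul_nonneg (hcw σ) (sq_nonneg _),
    summable_iff_tsum_ofReal_ne_top fun k => mul_nonneg (hw k) (sq_nonneg _),
    hP.tsum_ofReal_cw_mul_sq_inner hD hw]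

lemma norm_annihilation_comp_le (hP : IsBernoulliProduct p P) (hD : IsAnnihilation p P D)
    {C : ℝ → ℝ} (hC : LipschitzWith 1 C) {ξ : Lp ℝ 2 P} (hmem : MemLp (fun ω => C (ξ ω)) 2 P)
    (k : ℕ) : ‖D k (hmem.toLp _)‖ ≤ ‖D k ξ‖ := by
  rw [hP.annihilation_eq_discreteGradL hD]
  refine Lp.norm_le_norm_of_ae_le ?_
  filter_upwards [hP.coeFn_discreteGradL_toLp k hmem, hP.coeFn_discreteGradL k ξ] with ω h1 h2
  rw [h1, h2, discreteGrad, discreteGrad, norm_mul, norm_mul]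
  exact mul_le_mul_of_nonneg_left (by simpa using hC.norm_sub_le _ _) (norm_nonneg _)

end IsBernoulliProduct

theorem energy_form_contraction_property
    (p : ℕ → ℝ) (P : Measure Omega) [IsProbabilityMeasure P]
    (hp : ∀ n, 0 < p n ∧ p n < 1)
    (hdist : ∀ n, P {ω : Omega | ω n = true} = ENNReal.ofReal (p n))
    (hindep : iIndepFun (fun n (ω : Omega) => ω n) P)
    (D : ℕ → (Lp ℝ 2 P →L[ℝ] Lp ℝ 2 P))
    (hD : ∀ (k : ℕ) (σ : Finset ℕ),
      D k (ZLp p P σ) = if k ∈ σ then ZLp p P (σ.erase k) else 0)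
    (w : ℕ → ℝ) (hw : ∀ n, 0 ≤ w n)
    (C : ℝ → ℝ) (hC0 : C 0 = 0) (hC : ∀ s t : ℝ, |C s - C t| ≤ |s - t|)
    (ξ : Lp ℝ 2 P) (hξ : ξ ∈ Dw p P w) :
    ∃ hmem : MemLp (fun ω => C ((ξ : Omega → ℝ) ω)) 2 P,
      hmem.toLp _ ∈ Dw p P w ∧
      Ew w D (hmem.toLp _) (hmem.toLp _) ≤ Ew w D ξ ξ := by
  have hP : IsBernoulliProduct p P := ⟨hp, hdist, hindep⟩
  have hLip : LipschitzWith 1 C :=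
    LipschitzWith.of_dist_le_mul fun s t => by simpa [Real.dist_eq] using hC s t
  have hmem : MemLp (fun ω => C (ξ ω)) 2 P := hLip.comp_memLp hC0 (Lp.memLp ξ)
  have hle : ∀ k, w k * ‖D k (hmem.toLp _)‖ ^ 2 ≤ w k * ‖D k ξ‖ ^ 2 := fun k => by
    gcongr
    · exact hw k
    · exact hP.norm_annihilation_comp_le hD hLip hmem k
  have hsum := (hP.mem_Dw_iff hD hw ξ).mp hξ
  have hsum' := hsum.of_nonneg_of_le (fun k => mul_nonneg (hw k) (sq_nonneg _)) hle
  refine ⟨hmem, (hP.mem_Dw_iff hD hw _).mpr hsum', ?_⟩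
  rw [Ew_self, Ew_self]
  exact hsum'.tsum_le_tsum hle hsum

end
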